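/- arXiv:2510.03989 — 4 statements merged into one kernel-verified Lean document; each statement's English description precedes it below -/
import Mathlib

section
/- Let (Ω, μ) be a measure space with 0 < μ(Ω) < ∞, let v ∈ L²(μ) be real-valued, and set α = (1/μ(Ω)) ∫ v dμ and β = (1/μ(Ω)) ∫ (v − α)² dμ. Assume β > 0 and let σ₁ ∈ ℝ, σ₂ > 0. Define u = σ₂ · (v − α)/√β + σ₁. Then u belongs to the constraint set S₁(σ₁, σ₂) (i.e., (1/μ(Ω)) ∫ u dμ = σ₁ and (1/μ(Ω)) ∫ (u − σ₁)² dμ = σ₂²), and for every real-valued w ∈ L²(μ) with (1/μ(Ω)) ∫ w dμ = σ₁ and (1/μ(Ω)) ∫ (w − σ₁)² dμ = σ₂², one has ∫ (u − v)² dμ ≤ ∫ (w − v)² dμ. In other words, u is a minimizer of the squared L² distance to v over S₁(σ₁, σ₂). -/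
/-!
Centring at the means splits the squared distance to `v` of any `u` with mean `σ₁` as
`∫ ((u - σ₁) - (v - α))² + μ(Ω) (σ₁ - α)²`, since the first part has mean zero.
The candidate has `u - σ₁ = c (v - α)` with `c = σ₂ / √β`, and any admissible `w` has
`‖w - σ₁‖₂ = c ‖v - α‖₂`; the reverse triangle inequality in `L²` then gives
`‖(w - σ₁) - (v - α)‖₂ ≥ |c - 1| ‖v - α‖₂ = ‖(u - σ₁) - (v - α)‖₂`.
-/

open MeasureTheory

section

variable {Ω : Type*} [MeasurableSpace Ω] {μ : Measure Ω}

theorem MeasureTheory.MemLp.integral_sq_eq_norm_toLp_sq {f : Ω → ℝ} (hf : MemLp f 2 μ) :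
    ∫ x, f x ^ 2 ∂μ = ‖hf.toLp f‖ ^ 2 := by
  rw [← real_inner_self_eq_norm_sq, L2.inner_def]
  refine integral_congr_ae ?_
  filter_upwards [hf.coeFn_toLp] with x hx
  rw [hx, real_inner_self_eq_norm_sq, Real.norm_eq_abs, sq_abs]

theorem sq_sub_one_mul_integral_sq_le {f g : Ω → ℝ} (hf : MemLp f 2 μ) (hg : MemLp g 2 μ)
    {c : ℝ} (hc : 0 ≤ c) (hgf : ∫ x, g x ^ 2 ∂μ = c ^ 2 * ∫ x, f x ^ 2 ∂μ) :
    (c - 1) ^ 2 * ∫ x, f x ^ 2 ∂μ ≤ ∫ x, (g x - f x) ^ 2 ∂μ := by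
  rw [hf.integral_sq_eq_norm_toLp_sq, hg.integral_sq_eq_norm_toLp_sq, ← mul_pow] at hgf
  have hnorm : ‖hg.toLp g‖ = c * ‖hf.toLp f‖ :=
    (pow_left_inj₀ (norm_nonneg _) (by positivity) two_ne_zero).mp hgf
  have hsub : ∫ x, (g x - f x) ^ 2 ∂μ = ‖hg.toLp g - hf.toLp f‖ ^ 2 := by
    rw [← MemLp.toLp_sub]
    exact (hg.sub hf).integral_sq_eq_norm_toLp_sq
  rw [hf.integral_sq_eq_norm_toLp_sq, hsub, ← mul_pow, sub_one_mul, ← hnorm, ← sq_abs]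
  exact pow_le_pow_left₀ (abs_nonneg _) (abs_norm_sub_norm_le _ _) 2

theorem integral_sq_add_const_of_integral_eq_zero [IsFiniteMeasure μ] {f : Ω → ℝ}
    (hf : MemLp f 2 μ) (hf0 : ∫ x, f x ∂μ = 0) (a : ℝ) :
    ∫ x, (f x + a) ^ 2 ∂μ = ∫ x, f x ^ 2 ∂μ + μ.real Set.univ * a ^ 2 := by
  have hexpand :
      (fun x => (f x + a) ^ 2) = fun x => f x ^ 2 + (2 * a * f x + a ^ 2) := by
    funext x; ring
  have hf1 : Integrable f μ := hf.integrable one_le_two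
  have hlin : Integrable (fun x => 2 * a * f x + a ^ 2) μ :=
    (hf1.const_mul _).add (integrable_const _)
  rw [hexpand, integral_add hf.integrable_sq hlin,
    integral_add (hf1.const_mul _) (integrable_const _), integral_const_mul, hf0,
    integral_const, smul_eq_mul]
  ring

theorem inv_mul_integral_eq_iff_integral_sub_eq_zero [IsFiniteMeasure μ] {f : Ω → ℝ}
    (hμ : μ.real Set.univ ≠ 0) (hf : Integrable f μ) {a : ℝ} :
    (μ.real Set.univ)⁻¹ * ∫ x, f x ∂μ = a ↔ ∫ x, f x - a ∂μ = 0 := by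
  rw [integral_sub hf (integrable_const a), integral_const, smul_eq_mul, sub_eq_zero,
    inv_mul_eq_iff_eq_mul₀ hμ]

theorem integral_sq_sub_eq_of_integral_sub_eq_zero [IsFiniteMeasure μ] {f g : Ω → ℝ}
    {a b : ℝ} (hf : MemLp f 2 μ) (hg : MemLp g 2 μ) (hfa : ∫ x, f x - a ∂μ = 0)
    (hgb : ∫ x, g x - b ∂μ = 0) :
    ∫ x, (g x - f x) ^ 2 ∂μ =
      ∫ x, ((g x - b) - (f x - a)) ^ 2 ∂μ + μ.real Set.univ * (b - a) ^ 2 := by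
  have hfa' : MemLp (fun x => f x - a) 2 μ := hf.sub (memLp_const a)
  have hgb' : MemLp (fun x => g x - b) 2 μ := hg.sub (memLp_const b)
  have hcentred : ∫ x, (g x - b) - (f x - a) ∂μ = 0 := by
    rw [integral_sub (hgb'.integrable one_le_two) (hfa'.integrable one_le_two), hgb, hfa,
      sub_zero]
  calc ∫ x, (g x - f x) ^ 2 ∂μ = ∫ x, ((g x - b) - (f x - a) + (b - a)) ^ 2 ∂μ := by
        congr 1; funext x; ring
    _ = _ := integral_sq_add_const_of_integral_eq_zero (hgb'.sub hfa') hcentred _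

end

/-- Theorem 2.1: the layer-normalization formula `u = σ₂ (v − α)/√β + σ₁` lies in the
constraint set `S₁(σ₁, σ₂)` and minimizes the squared `L²` distance to `v` over that set. -/
theorem layer_norm_projection_minimizer
    {Ω : Type*} [MeasurableSpace Ω] (μ : Measure Ω)
    (h0 : 0 < μ Set.univ) (hfin : μ Set.univ < ⊤)
    (v : Ω → ℝ) (hv : MemLp v 2 μ)
    (α β : ℝ)
    (hα : α = ((μ Set.univ).toReal)⁻¹ * ∫ x, v x ∂μ)
    (hβ : β = ((μ Set.univ).toReal)⁻¹ * ∫ x, (v x - α) ^ 2 ∂μ)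
    (hβpos : 0 < β)
    (σ₁ σ₂ : ℝ) (hσ₂ : 0 < σ₂)
    (u : Ω → ℝ)
    (hu : ∀ x, u x = σ₂ * (v x - α) / Real.sqrt β + σ₁) :
    (((μ Set.univ).toReal)⁻¹ * ∫ x, u x ∂μ = σ₁ ∧
      ((μ Set.univ).toReal)⁻¹ * ∫ x, (u x - σ₁) ^ 2 ∂μ = σ₂ ^ 2) ∧
    ∀ w : Ω → ℝ, MemLp w 2 μ →
      ((μ Set.univ).toReal)⁻¹ * ∫ x, w x ∂μ = σ₁ →
      ((μ Set.univ).toReal)⁻¹ * ∫ x, (w x - σ₁) ^ 2 ∂μ = σ₂ ^ 2 →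
      ∫ x, (u x - v x) ^ 2 ∂μ ≤ ∫ x, (w x - v x) ^ 2 ∂μ := by
  have : IsFiniteMeasure μ := ⟨hfin⟩
  simp only [← measureReal_def] at hα hβ ⊢
  have hM : μ.real Set.univ ≠ 0 := (ENNReal.toReal_pos h0.ne' hfin.ne).ne'
  have hf : MemLp (fun x => v x - α) 2 μ := hv.sub (memLp_const α)
  have hf0 : ∫ x, v x - α ∂μ = 0 :=
    (inv_mul_integral_eq_iff_integral_sub_eq_zero hM (hv.integrable one_le_two)).mp hα.symm
  have hf2 : ∫ x, (v x - α) ^ 2 ∂μ = μ.real Set.univ * β :=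
    (inv_mul_eq_iff_eq_mul₀ hM).mp hβ.symm
  set c := σ₂ / √β
  have hc : c ^ 2 * β = σ₂ ^ 2 := by
    rw [div_pow, Real.sq_sqrt hβpos.le, div_mul_cancel₀ _ hβpos.ne']
  obtain rfl : u = fun x => c * (v x - α) + σ₁ := by
    funext x; rw [hu x]; ring
  have hu_mem : MemLp (fun x => c * (v x - α) + σ₁) 2 μ :=
    (hf.const_mul c).add (memLp_const σ₁)
  have hu0 : ∫ x, c * (v x - α) + σ₁ - σ₁ ∂μ = 0 := by
    simp_rw [add_sub_cancel_right, integral_const_mul, hf0, mul_zero]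
  refine ⟨⟨?_, ?_⟩, fun w hw hw1 hw2 => ?_⟩
  · rwa [inv_mul_integral_eq_iff_integral_sub_eq_zero hM (hu_mem.integrable one_le_two)]
  · rw [inv_mul_eq_iff_eq_mul₀ hM]
    simp_rw [add_sub_cancel_right, mul_pow, integral_const_mul, hf2, ← hc]
    ring
  rw [inv_mul_integral_eq_iff_integral_sub_eq_zero hM (hw.integrable one_le_two)] at hw1
  have hg : MemLp (fun x => w x - σ₁) 2 μ := hw.sub (memLp_const σ₁)
  have hg2 : ∫ x, (w x - σ₁) ^ 2 ∂μ = μ.real Set.univ * σ₂ ^ 2 :=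
    (inv_mul_eq_iff_eq_mul₀ hM).mp hw2
  rw [integral_sq_sub_eq_of_integral_sub_eq_zero hv hu_mem hf0 hu0,
    integral_sq_sub_eq_of_integral_sub_eq_zero hv hw hf0 hw1]
  gcongr ?_ + _
  calc ∫ x, (c * (v x - α) + σ₁ - σ₁ - (v x - α)) ^ 2 ∂μ
      = (c - 1) ^ 2 * ∫ x, (v x - α) ^ 2 ∂μ := by
        simp_rw [add_sub_cancel_right, ← sub_one_mul, mul_pow, integral_const_mul]
    _ ≤ ∫ x, (w x - σ₁ - (v x - α)) ^ 2 ∂μ :=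
      sq_sub_one_mul_integral_sq_le hf hg (by positivity)
        (by rw [hg2, hf2, ← hc]; ring)
end

section
/- Let (Ω, μ) be a measure space with 0 < μ(Ω) < ∞, let v ∈ L²(μ) be real-valued with mean α = (1/μ(Ω)) ∫ v dμ and variance β = (1/μ(Ω)) ∫ (v − α)² dμ, and assume β > 0 and σ₂ > 0, σ₁ ∈ ℝ. If w ∈ L²(μ) satisfies (1/μ(Ω)) ∫ w dμ = σ₁, (1/μ(Ω)) ∫ (w − σ₁)² dμ = σ₂², and ∫ (w − v)² dμ ≤ ∫ (u − v)² dμ where u = σ₂ · (v − α)/√β + σ₁, then w = u μ-almost everywhere. That is, the minimizer in the layer-normalization projection problem is unique up to μ-null sets. -/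
/-!
In `L²(μ)` the mean and variance are inner-product data relative to the constant function `e = 1`:
`⟪e, w⟫ = σ₁ ‖e‖²` and `‖w - σ₁ e‖² = σ₂² ‖e‖²`. Since `e` is orthogonal to the centred parts
`p = v - α e` and `q = w - σ₁ e`, Pythagoras splits off the same term `(σ₁ - α)² ‖e‖²` from
`‖w - v‖²` and `‖u - v‖²`, so `q` is a vector of norm `‖c p‖` (with `c = σ₂ / √β`) at distance at
most `‖c p - p‖` from `p`. Expanding the squares gives `⟪q, p⟫ ≥ c ‖p‖²`, hence
`‖q - c p‖² = 2 c² ‖p‖² - 2 c ⟪q, p⟫ ≤ 0`. The argument works in any real inner product space.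
-/

open MeasureTheory
open scoped RealInnerProductSpace ENNReal

section InnerProductSpace

variable {E : Type*} [NormedAddCommGroup E] [InnerProductSpace ℝ E]

theorem eq_smul_of_norm_eq_of_norm_sub_le {a b : E} {c : ℝ} (hc : 0 ≤ c)
    (hnorm : ‖a‖ = ‖c • b‖) (hle : ‖a - b‖ ≤ ‖c • b - b‖) : a = c • b := by
  have hinner : c * ‖b‖ ^ 2 ≤ ⟪a, b⟫ := by
    have := pow_le_pow_left₀ (norm_nonneg _) hle 2
    rw [norm_sub_sq_real, norm_sub_sq_real, hnorm, real_inner_smul_left,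
      real_inner_self_eq_norm_sq] at this
    linarith
  have hsq : ‖a - c • b‖ ^ 2 ≤ 0 := by
    rw [norm_sub_sq_real, hnorm, real_inner_smul_right, norm_smul, mul_pow, Real.norm_eq_abs,
      sq_abs]
    nlinarith [mul_le_mul_of_nonneg_left hinner hc]
  rw [← sub_eq_zero, ← norm_eq_zero]
  exact pow_eq_zero_iff two_ne_zero |>.mp (le_antisymm hsq (by positivity))

theorem norm_add_smul_sq_of_inner_eq_zero {x e : E} (h : ⟪e, x⟫ = 0) (d : ℝ) :
    ‖x + d • e‖ ^ 2 = ‖x‖ ^ 2 + d ^ 2 * ‖e‖ ^ 2 := by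
  rw [norm_add_sq_real, real_inner_smul_right, real_inner_comm, h, norm_smul, mul_pow,
    Real.norm_eq_abs, sq_abs]
  ring

theorem InnerProductSpace.layer_norm_projection_unique {e v w u : E} {α β σ₁ σ₂ : ℝ}
    (hα : ⟪e, v⟫ = α * ‖e‖ ^ 2) (hβ : ‖v - α • e‖ ^ 2 = β * ‖e‖ ^ 2) (hβpos : 0 < β)
    (hσ₂ : 0 ≤ σ₂) (hu : u = (σ₂ / √β) • (v - α • e) + σ₁ • e)
    (hw₁ : ⟪e, w⟫ = σ₁ * ‖e‖ ^ 2) (hw₂ : ‖w - σ₁ • e‖ ^ 2 = σ₂ ^ 2 * ‖e‖ ^ 2)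
    (hmin : ‖w - v‖ ≤ ‖u - v‖) : w = u := by
  set c := σ₂ / √β
  set p := v - α • e
  set q := w - σ₁ • e
  have hp : ⟪e, p⟫ = 0 := by
    rw [inner_sub_right, real_inner_smul_right, real_inner_self_eq_norm_sq, hα, sub_self]
  have hq : ⟪e, q⟫ = 0 := by
    rw [inner_sub_right, real_inner_smul_right, real_inner_self_eq_norm_sq, hw₁, sub_self]
  have hwv : w - v = (q - p) + (σ₁ - α) • e := by simp only [p, q]; module
  have huv : u - v = (c • p - p) + (σ₁ - α) • e := by rw [hu]; simp only [p]; module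
  have hqp : ‖q - p‖ ≤ ‖c • p - p‖ := by
    have := pow_le_pow_left₀ (norm_nonneg _) hmin 2
    rw [hwv, huv, norm_add_smul_sq_of_inner_eq_zero (by rw [inner_sub_right, hq, hp, sub_self]),
      norm_add_smul_sq_of_inner_eq_zero
        (by rw [inner_sub_right, real_inner_smul_right, hp, mul_zero, sub_self])] at this
    exact le_of_pow_le_pow_left₀ two_ne_zero (norm_nonneg _) (by linarith)
  have hnorm : ‖q‖ = ‖c • p‖ := by
    refine (sq_eq_sq₀ (norm_nonneg _) (norm_nonneg _)).mp ?_
    rw [norm_smul, mul_pow, hw₂, hβ, Real.norm_eq_abs, sq_abs, div_pow, Real.sq_sqrt hβpos.le]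
    field_simp
  rw [hu, ← eq_smul_of_norm_eq_of_norm_sub_le (by positivity) hnorm hqp, sub_add_cancel]

end InnerProductSpace

namespace MeasureTheory

variable {Ω : Type*} [MeasurableSpace Ω] {μ : Measure Ω} {f g : Ω → ℝ}

namespace MemLp

theorem inner_toLp_toLp (hf : MemLp f 2 μ) (hg : MemLp g 2 μ) :
    ⟪hf.toLp f, hg.toLp g⟫ = ∫ x, f x * g x ∂μ := by
  rw [L2.inner_def]
  refine integral_congr_ae ?_
  filter_upwards [hf.coeFn_toLp, hg.coeFn_toLp] with x hfx hgx
  rw [hfx, hgx, real_inner_eq_re_inner, RCLike.inner_apply]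
  simp [mul_comm]

theorem norm_toLp_sq (hf : MemLp f 2 μ) : ‖hf.toLp f‖ ^ 2 = ∫ x, f x ^ 2 ∂μ := by
  rw [← real_inner_self_eq_norm_sq, inner_toLp_toLp]
  simp only [sq]

end MemLp

variable [IsFiniteMeasure μ]

theorem Lp.smul_const_one {p : ℝ≥0∞} (a : ℝ) : a • Lp.const p μ (1 : ℝ) = Lp.const p μ a := by
  simpa using ((Lp.constₗ p μ ℝ).map_smul a (1 : ℝ)).symm

theorem Lp.norm_const_one_sq : ‖Lp.const 2 μ (1 : ℝ)‖ ^ 2 = μ.real Set.univ := by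
  rw [← MemLp.toLp_const, MemLp.norm_toLp_sq]
  simp

namespace MemLp

theorem inner_const_one_toLp (hf : MemLp f 2 μ) :
    ⟪Lp.const 2 μ (1 : ℝ), hf.toLp f⟫ = ∫ x, f x ∂μ := by
  rw [← toLp_const, inner_toLp_toLp]
  simp

theorem toLp_sub_smul_const_one (hf : MemLp f 2 μ) (a : ℝ) :
    hf.toLp f - a • Lp.const 2 μ (1 : ℝ) = (hf.sub (memLp_const a)).toLp (fun x => f x - a) := by
  rw [Lp.smul_const_one]
  rfl

theorem toLp_eq_smul_toLp_sub_add (hf : MemLp f 2 μ) (hg : MemLp g 2 μ) {c a d : ℝ}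
    (hg_eq : ∀ x, g x = c * (f x - a) + d) :
    hg.toLp g = c • (hf.toLp f - a • Lp.const 2 μ (1 : ℝ)) + d • Lp.const 2 μ (1 : ℝ) := by
  rw [toLp_sub_smul_const_one, Lp.smul_const_one]
  exact hg.toLp_congr (((hf.sub (memLp_const a)).const_smul c).add (memLp_const d))
    (Filter.Eventually.of_forall fun x => by simp [hg_eq])

end MemLp

end MeasureTheory

/-- Uniqueness part of Theorem 2.1: any member of the constraint set whose squared `L²`
distance to `v` does not exceed that of `u = σ₂ (v − α)/√β + σ₁` coincides with `u`
μ-almost everywhere. -/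
theorem layer_norm_projection_unique
    {Ω : Type*} [MeasurableSpace Ω] (μ : Measure Ω)
    (h0 : 0 < μ Set.univ) (hfin : μ Set.univ < ⊤)
    (v : Ω → ℝ) (hv : MemLp v 2 μ)
    (α β : ℝ)
    (hα : α = ((μ Set.univ).toReal)⁻¹ * ∫ x, v x ∂μ)
    (hβ : β = ((μ Set.univ).toReal)⁻¹ * ∫ x, (v x - α) ^ 2 ∂μ)
    (hβpos : 0 < β)
    (σ₁ σ₂ : ℝ) (hσ₂ : 0 < σ₂)
    (u : Ω → ℝ)
    (hu : ∀ x, u x = σ₂ * (v x - α) / Real.sqrt β + σ₁)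
    (w : Ω → ℝ) (hwmem : MemLp w 2 μ)
    (hwmean : ((μ Set.univ).toReal)⁻¹ * ∫ x, w x ∂μ = σ₁)
    (hwvar : ((μ Set.univ).toReal)⁻¹ * ∫ x, (w x - σ₁) ^ 2 ∂μ = σ₂ ^ 2)
    (hwmin : ∫ x, (w x - v x) ^ 2 ∂μ ≤ ∫ x, (u x - v x) ^ 2 ∂μ) :
    w =ᵐ[μ] u := by
  have : IsFiniteMeasure μ := ⟨hfin⟩
  have hM : (μ Set.univ).toReal ≠ 0 := (ENNReal.toReal_pos h0.ne' hfin.ne).ne'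
  have he : ‖Lp.const 2 μ (1 : ℝ)‖ ^ 2 = (μ Set.univ).toReal := Lp.norm_const_one_sq
  have hu' : ∀ x, u x = σ₂ / √β * (v x - α) + σ₁ := fun x => by rw [hu x]; ring
  have hu2 : MemLp u 2 μ := (((hv.sub (memLp_const α)).const_mul _).add (memLp_const σ₁)).ae_eq
    (Filter.Eventually.of_forall fun x => (hu' x).symm)
  rw [← hwmem.toLp_eq_toLp_iff hu2]
  refine InnerProductSpace.layer_norm_projection_unique (hβpos := hβpos) (hσ₂ := hσ₂.le)
    (hu := hv.toLp_eq_smul_toLp_sub_add hu2 hu') ?_ ?_ ?_ ?_ ?_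
  · rw [hv.inner_const_one_toLp, he, hα]
    field_simp
  · rw [hv.toLp_sub_smul_const_one, MemLp.norm_toLp_sq, he, hβ]
    field_simp
  · rw [hwmem.inner_const_one_toLp, he, ← hwmean]
    field_simp
  · rw [hwmem.toLp_sub_smul_const_one, MemLp.norm_toLp_sq, he, ← hwvar]
    field_simp
  · rw [← sq_le_sq₀ (norm_nonneg _) (norm_nonneg _), ← MemLp.toLp_sub, ← MemLp.toLp_sub,
      MemLp.norm_toLp_sq, MemLp.norm_toLp_sq]
    exact hwmin
end

section
/- Let N be a positive natural number and v ∈ ℝᴺ. Set α = (1/N) Σₗ vₗ and β = (1/N) Σₗ (vₗ − α)². Assume β > 0, σ₂ > 0, σ₁ ∈ ℝ, and define u ∈ ℝᴺ by uₗ = σ₂ · (vₗ − α)/√β + σ₁. Then (1/N) Σₗ uₗ = σ₁ and (1/N) Σₗ (uₗ − σ₁)² = σ₂², and for every w ∈ ℝᴺ with (1/N) Σₗ wₗ = σ₁ and (1/N) Σₗ (wₗ − σ₁)² = σ₂² one has Σₗ (uₗ − vₗ)² ≤ Σₗ (wₗ − vₗ)². That is, the discrete layer-normalization formula gives a minimizer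 of the squared Euclidean distance to v over all vectors with prescribed mean σ₁ and variance σ₂². -/
/-!
Write `x = v - α` and `y = w - σ₁`. Both `x` and `y` sum to zero, so they are orthogonal to the
constant vectors and `∑ (w - v)² = ∑ y² + ∑ x² - 2 ∑ x y + N (σ₁ - α)²`. On the constraint set
everything here except `∑ x y` is fixed, and by Cauchy–Schwarz `∑ x y` is largest when `y` is a
nonnegative multiple of `x`, which is exactly `u - σ₁ = (σ₂ / √β) x`.
-/

open Finset

section

variable {ι : Type*} [Fintype ι]

lemma sum_sub_const_eq_zero_iff (f : ι → ℝ) (a : ℝ) :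
    ∑ i, (f i - a) = 0 ↔ ∑ i, f i = Fintype.card ι * a := by
  simp [sum_sub_distrib, sub_eq_zero]

lemma sum_sq_sub_eq_of_sum_sub_eq_zero {f g : ι → ℝ} {a b : ℝ}
    (hf : ∑ i, (f i - a) = 0) (hg : ∑ i, (g i - b) = 0) :
    ∑ i, (f i - g i) ^ 2 =
      ∑ i, (f i - a) ^ 2 + ∑ i, (g i - b) ^ 2 - 2 * ∑ i, (f i - a) * (g i - b)
        + Fintype.card ι * (a - b) ^ 2 := by
  have hexpand : ∀ i, (f i - g i) ^ 2 =
      (f i - a) ^ 2 + (g i - b) ^ 2 - 2 * ((f i - a) * (g i - b))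
        + (2 * (a - b) * (f i - a) - 2 * (a - b) * (g i - b)) + (a - b) ^ 2 := fun i => by ring
  simp only [hexpand, sum_add_distrib, sum_sub_distrib, ← mul_sum, hf, hg, sum_const,
    card_univ, nsmul_eq_mul]
  ring

lemma sum_mul_le_sum_const_mul_mul_of_sum_sq_eq (x y : ι → ℝ) {c : ℝ} (hc : 0 ≤ c)
    (hy : ∑ i, y i ^ 2 = ∑ i, (c * x i) ^ 2) :
    ∑ i, y i * x i ≤ ∑ i, c * x i * x i := by
  have hS : ∑ i, c * x i * x i = c * ∑ i, x i ^ 2 := by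
    rw [mul_sum]; exact sum_congr rfl fun i _ => by ring
  have hy' : ∑ i, y i ^ 2 = c ^ 2 * ∑ i, x i ^ 2 := by
    rw [hy, mul_sum]; exact sum_congr rfl fun i _ => by ring
  have hcs : (∑ i, y i * x i) ^ 2 ≤ (c * ∑ i, x i ^ 2) ^ 2 := by
    calc (∑ i, y i * x i) ^ 2 ≤ (∑ i, y i ^ 2) * ∑ i, x i ^ 2 := sum_mul_sq_le_sq_mul_sq _ _ _
      _ = (c * ∑ i, x i ^ 2) ^ 2 := by rw [hy']; ring
  rw [hS]
  exact (abs_le_of_sq_le_sq' hcs (by positivity)).2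

end

/-- Discrete layer normalization (discrete version of Theorem 2.1): the vector
`uₗ = σ₂ (vₗ − α)/√β + σ₁` has mean `σ₁` and variance `σ₂²` and minimizes the squared
Euclidean distance to `v` over all vectors with mean `σ₁` and variance `σ₂²`. -/
theorem discrete_layer_norm_projection
    (N : ℕ) (hN : 0 < N) (v : Fin N → ℝ)
    (α β : ℝ)
    (hα : α = (N : ℝ)⁻¹ * ∑ l, v l)
    (hβ : β = (N : ℝ)⁻¹ * ∑ l, (v l - α) ^ 2)
    (hβpos : 0 < β)
    (σ₁ σ₂ : ℝ) (hσ₂ : 0 < σ₂)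
    (u : Fin N → ℝ)
    (hu : ∀ l, u l = σ₂ * (v l - α) / Real.sqrt β + σ₁) :
    ((N : ℝ)⁻¹ * ∑ l, u l = σ₁ ∧ (N : ℝ)⁻¹ * ∑ l, (u l - σ₁) ^ 2 = σ₂ ^ 2) ∧
    ∀ w : Fin N → ℝ,
      (N : ℝ)⁻¹ * ∑ l, w l = σ₁ →
      (N : ℝ)⁻¹ * ∑ l, (w l - σ₁) ^ 2 = σ₂ ^ 2 →
      ∑ l, (u l - v l) ^ 2 ≤ ∑ l, (w l - v l) ^ 2 := by
  have hN' : (N : ℝ) ≠ 0 := by positivity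
  have centered (f : Fin N → ℝ) (a : ℝ) :
      (N : ℝ)⁻¹ * ∑ l, f l = a ↔ ∑ l, (f l - a) = 0 := by
    rw [inv_mul_eq_iff_eq_mul₀ hN', sum_sub_const_eq_zero_iff, Fintype.card_fin]
  set c := σ₂ / Real.sqrt β
  have hu_sub (l : Fin N) : u l - σ₁ = c * (v l - α) := by rw [hu l]; ring
  have hv_mean : ∑ l, (v l - α) = 0 := (centered v α).1 hα.symm
  have hv_var : ∑ l, (v l - α) ^ 2 = N * β := by rw [hβ, mul_inv_cancel_left₀ hN']
  have hu_mean : ∑ l, (u l - σ₁) = 0 := by simp only [hu_sub, ← mul_sum, hv_mean, mul_zero]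
  have hu_var : ∑ l, (u l - σ₁) ^ 2 = N * σ₂ ^ 2 := by
    simp only [hu_sub, mul_pow, ← mul_sum, hv_var, c, div_pow, Real.sq_sqrt hβpos.le]
    field_simp
  refine ⟨⟨(centered u σ₁).2 hu_mean, by rw [hu_var, inv_mul_cancel_left₀ hN']⟩, ?_⟩
  intro w hw_mean hw_var
  rw [inv_mul_eq_iff_eq_mul₀ hN', ← hu_var] at hw_var
  rw [sum_sq_sub_eq_of_sum_sub_eq_zero hu_mean hv_mean,
    sum_sq_sub_eq_of_sum_sub_eq_zero ((centered w σ₁).1 hw_mean) hv_mean, hw_var]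
  have hmax := sum_mul_le_sum_const_mul_mul_of_sum_sq_eq (fun l => v l - α) (fun l => w l - σ₁)
    (div_nonneg hσ₂.le (Real.sqrt_nonneg β)) (by simpa only [hu_sub] using hw_var)
  simp only [hu_sub] at hmax ⊢
  linarith
end

section
/- Let (Ω, μ) be a measure space with 0 < μ(Ω) < ∞, let u, v ∈ L²(μ) be real-valued, let λ₁, λ₂, σ₁ ∈ ℝ and σ₂ > 0. Suppose the stationarity equation (u − v) + λ₁/μ(Ω) + (2λ₂/μ(Ω))(u − σ₁) = 0 holds μ-almost everywhere, that (1/μ(Ω)) ∫ u dμ = σ₁, and that (1/μ(Ω)) ∫ (u − σ₁)² dμ = σ₂². Then λ₂ = −μ(Ω)/2 + (∫ v (u − σ₁) dμ) / (2σ₂²). -/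
open MeasureTheory

/- On the event where the stationarity equation holds, `v` is an affine function
`α + β (u − σ₁)` of the centred variable `u − σ₁`, with `β = 1 + 2λ₂/μ(Ω)`. Since `u − σ₁` has
mean zero, pairing with it kills the constant `α`, so `∫ v (u − σ₁) = β ∫ (u − σ₁)² = β σ₂² μ(Ω)`,
which is linear in `λ₂` with nonzero slope `2σ₂²`. -/

theorem integral_mul_eq_of_ae_eq_affine {Ω : Type*} [MeasurableSpace Ω] {μ : Measure Ω}
    {v w : Ω → ℝ} {α β : ℝ} (hw : Integrable w μ) (hw_sq : Integrable (fun x => w x ^ 2) μ)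
    (hw_zero : ∫ x, w x ∂μ = 0) (hv : ∀ᵐ x ∂μ, v x = α + β * w x) :
    ∫ x, v x * w x ∂μ = β * ∫ x, w x ^ 2 ∂μ :=
  calc ∫ x, v x * w x ∂μ = ∫ x, α * w x + β * w x ^ 2 ∂μ :=
        integral_congr_ae (by filter_upwards [hv] with x hx; rw [hx]; ring)
    _ = α * ∫ x, w x ∂μ + β * ∫ x, w x ^ 2 ∂μ := by
        rw [integral_add (hw.const_mul α) (hw_sq.const_mul β), integral_const_mul,
          integral_const_mul]
    _ = β * ∫ x, w x ^ 2 ∂μ := by rw [hw_zero]; ring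

theorem lagrange_multiplier_lambda2_general
    {Ω : Type*} [MeasurableSpace Ω] (μ : Measure Ω)
    (h0 : 0 < μ Set.univ) (hfin : μ Set.univ < ⊤)
    (u v : Ω → ℝ) (hu : MemLp u 2 μ)
    (lam₁ lam₂ σ₁ σ₂ : ℝ) (hσ₂ : 0 < σ₂)
    (hstat : ∀ᵐ x ∂μ,
      (u x - v x) + lam₁ / (μ Set.univ).toReal
        + (2 * lam₂ / (μ Set.univ).toReal) * (u x - σ₁) = 0)
    (hmean : ((μ Set.univ).toReal)⁻¹ * ∫ x, u x ∂μ = σ₁)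
    (hvar : ((μ Set.univ).toReal)⁻¹ * ∫ x, (u x - σ₁) ^ 2 ∂μ = σ₂ ^ 2) :
    lam₂ = -(μ Set.univ).toReal / 2
      + (∫ x, v x * (u x - σ₁) ∂μ) / (2 * σ₂ ^ 2) := by
  have : IsFiniteMeasure μ := ⟨hfin⟩
  set M := (μ Set.univ).toReal
  have hM : M ≠ 0 := ENNReal.toReal_ne_zero.mpr ⟨h0.ne', hfin.ne⟩
  have hw : MemLp (fun x => u x - σ₁) 2 μ := hu.sub (memLp_const σ₁)
  have hσ₁ : ⨍ x, u x ∂μ = σ₁ := by rw [average_eq, measureReal_def, smul_eq_mul, hmean]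
  have hw_zero : ∫ x, u x - σ₁ ∂μ = 0 := hσ₁ ▸ integral_sub_average μ u
  have hw_sq : ∫ x, (u x - σ₁) ^ 2 ∂μ = σ₂ ^ 2 * M := by
    rw [← hvar, mul_comm, mul_inv_cancel_left₀ hM]
  have hv : ∀ᵐ x ∂μ, v x = (σ₁ + lam₁ / M) + (1 + 2 * lam₂ / M) * (u x - σ₁) := by
    filter_upwards [hstat] with x hx
    linarith
  rw [integral_mul_eq_of_ae_eq_affine (hw.integrable one_le_two) hw.integrable_sq hw_zero hv,
    hw_sq]
  field_simp
  ring

/-- Equation (eq.ln.proof.lam2): multiplying the stationarity equation by `(u − σ₁)`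
and integrating over `Ω`, using the mean and variance constraints on `u`, yields
`λ₂ = −μ(Ω)/2 + (∫ v (u − σ₁) dμ)/(2σ₂²)`. -/
theorem lagrange_multiplier_lambda2
    {Ω : Type*} [MeasurableSpace Ω] (μ : Measure Ω)
    (h0 : 0 < μ Set.univ) (hfin : μ Set.univ < ⊤)
    (u v : Ω → ℝ) (hu : MemLp u 2 μ) (hv : MemLp v 2 μ)
    (lam₁ lam₂ σ₁ σ₂ : ℝ) (hσ₂ : 0 < σ₂)
    (hstat : ∀ᵐ x ∂μ,
      (u x - v x) + lam₁ / (μ Set.univ).toReal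
        + (2 * lam₂ / (μ Set.univ).toReal) * (u x - σ₁) = 0)
    (hmean : ((μ Set.univ).toReal)⁻¹ * ∫ x, u x ∂μ = σ₁)
    (hvar : ((μ Set.univ).toReal)⁻¹ * ∫ x, (u x - σ₁) ^ 2 ∂μ = σ₂ ^ 2) :
    lam₂ = -(μ Set.univ).toReal / 2
      + (∫ x, v x * (u x - σ₁) ∂μ) / (2 * σ₂ ^ 2) :=
  lagrange_multiplier_lambda2_general μ h0 hfin u v hu lam₁ lam₂ σ₁ σ₂ hσ₂ hstat hmean hvar
end
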